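/- Let k ≥ 1, n ≥ 2k and d ≤ n be natural numbers. Then the sum, over all primitive polynomials p of degree k over GF(2), of the number of codewords c ∈ S(p,n) with 1 ≤ w(c) ≤ d is at most Σ_{j=1}^{d} C(n,j), the total number of nonzero vectors in GF(2)^n of Hamming weight at most d (because nonzero codewords of distinct truncated PR codes of dimension k and length n ≥ 2k are distinct vectors). -/

import Mathlib

/-- The truncated primitive rateless (PR) code `S(p,n)` for a polynomial `p` of degree `k`
over `GF(2)`: the set of vectors `c ∈ GF(2)^n` satisfying the linear recurrence
`∑_{i=0}^k p_i c_{j+i} = 0` for every `j` with `0 ≤ j ≤ n - k - 1`. -/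
def PRcode (k : ℕ) (p : Polynomial (ZMod 2)) (n : ℕ) : Set (Fin n → ZMod 2) :=
  {c | ∀ j : ℕ, j + k < n →
    ∑ i ∈ Finset.range (k + 1), p.coeff i * (if h : j + i < n then c ⟨j + i, h⟩ else 0) = 0}

/-- `p` is a primitive polynomial of degree `k` over `GF(2)`: it is the minimal polynomial of
some element `α` of `GF(2^k)` of multiplicative order `2^k - 1`. -/
def IsPrimitivePoly (k : ℕ) (p : Polynomial (ZMod 2)) : Prop :=
  ∃ α : GaloisField 2 k, orderOf α = 2 ^ k - 1 ∧ p = minpoly (ZMod 2) α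
/-- The (finite) set of primitive polynomials of degree `k` over `GF(2)`, as a `Finset`. -/
noncomputable def primPolyFinset (k : ℕ) : Finset (Polynomial (ZMod 2)) :=
  Set.Finite.toFinset (s := {p : Polynomial (ZMod 2) | IsPrimitivePoly k p})
    (Set.Finite.subset (Set.finite_range fun α : GaloisField 2 k => minpoly (ZMod 2) α)
      (by rintro p ⟨α, -, rfl⟩; exact ⟨α, rfl⟩))

/-!
Let `f ∈ R[X]` act on sequences `ℕ → R` with `X` acting as the left shift, so that
`c ∈ S(p, n)` says that `p` annihilates `c` on the window `[0, n - k)`. Distinct primitive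
polynomials of degree `k` are distinct monic irreducibles, hence coprime. If `c` lies in both
`S(p, n)` and `S(q, n)`, extend it by the `p`-recurrence to a solution `e` on all of `ℕ`. Because
`n ≥ 2k`, the sequence `q e` still vanishes on its first `k` terms, and it solves the
`p`-recurrence, so `q e = 0`; a Bézout identity `a p + b q = 1` then gives `e = 0`. So the
nonzero codewords of weight at most `d` of the different codes are disjoint sets of nonzero
vectors of weight at most `d`, and there are `∑_{j=1}^d C(n, j)` of those.
-/

open Polynomial Finset

section RecurrenceOperator

variable {R : Type*} [CommRing R]

lemma LinearMap.funLeft_succ_pow_apply (i : ℕ) (u : ℕ → R) (j : ℕ) :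
    (LinearMap.funLeft R R Nat.succ ^ i) u j = u (j + i) := by
  induction i generalizing j with
  | zero => rfl
  | succ i ih =>
    rw [pow_succ', Module.End.mul_apply, LinearMap.funLeft_apply, ih, Nat.succ_add_eq_add_succ]

namespace Polynomial

noncomputable def recurrenceOp : R[X] →ₐ[R] Module.End R (ℕ → R) :=
  aeval (LinearMap.funLeft R R Nat.succ)

lemma recurrenceOp_apply_of_natDegree_lt {f : R[X]} {N : ℕ} (hN : f.natDegree < N)
    (u : ℕ → R) (j : ℕ) : recurrenceOp f u j = ∑ i ∈ range N, f.coeff i * u (j + i) := by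
  simp [recurrenceOp, aeval_eq_sum_range' hN, LinearMap.funLeft_succ_pow_apply]

lemma recurrenceOp_congr {f : R[X]} {m : ℕ} (hf : f.natDegree ≤ m) {u v : ℕ → R} {j : ℕ}
    (h : ∀ i ≤ m, u (j + i) = v (j + i)) : recurrenceOp f u j = recurrenceOp f v j := by
  simp only [recurrenceOp_apply_of_natDegree_lt (Nat.lt_succ_of_le hf)]
  exact sum_congr rfl fun i hi => by rw [h i (Nat.le_of_lt_succ (mem_range.mp hi))]

lemma recurrenceOp_comm (f g : R[X]) (u : ℕ → R) :
    recurrenceOp f (recurrenceOp g u) = recurrenceOp g (recurrenceOp f u) := by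
  rw [← Module.End.mul_apply, ← map_mul, mul_comm, map_mul, Module.End.mul_apply]

variable {p : R[X]} {k : ℕ}

lemma Monic.recurrenceOp_apply (hp : p.Monic) (hk : p.natDegree = k) (u : ℕ → R) (j : ℕ) :
    recurrenceOp p u j = ∑ i ∈ range k, p.coeff i * u (j + i) + u (j + k) := by
  rw [recurrenceOp_apply_of_natDegree_lt (hk.symm ▸ Nat.lt_succ_self k), sum_range_succ, ← hk,
    hp.coeff_natDegree, one_mul]

lemma Monic.eq_zero_of_recurrenceOp_window (hp : p.Monic) (hk : p.natDegree = k) {n : ℕ}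
    {u : ℕ → R} (hrec : ∀ j, j + k < n → recurrenceOp p u j = 0) (hinit : ∀ j < k, u j = 0) :
    ∀ j < n, u j = 0 := by
  intro j
  induction j using Nat.strong_induction_on with
  | _ j ih =>
    intro hj
    by_cases hjk : j < k
    · exact hinit j hjk
    have h := hp.recurrenceOp_apply hk u (j - k)
    rw [hrec (j - k) (by omega), sum_eq_zero fun i hi => by
      rw [ih _ (by simp at hi; omega) (by simp at hi; omega), mul_zero],
      zero_add, Nat.sub_add_cancel (not_lt.mp hjk)] at h
    exact h.symm

lemma Monic.eq_zero_of_recurrenceOp_eq_zero (hp : p.Monic) (hk : p.natDegree = k) {u : ℕ → R}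
    (hrec : recurrenceOp p u = 0) (hinit : ∀ j < k, u j = 0) : u = 0 :=
  _root_.funext fun j => hp.eq_zero_of_recurrenceOp_window hk (n := j + 1)
    (fun i _ => congrFun hrec i) hinit j j.lt_succ_self

lemma Monic.exists_recurrenceOp_eq_zero (hp : p.Monic) (hk : p.natDegree = k) (init : ℕ → R) :
    ∃ e, recurrenceOp p e = 0 ∧ ∀ j < k, e j = init j := by
  let E : LinearRecurrence R := ⟨k, fun i => -p.coeff i⟩
  refine ⟨E.mkSol fun i => init i, _root_.funext fun j => ?_, fun j hj => E.mkSol_eq_init _ ⟨j, hj⟩⟩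
  rw [hp.recurrenceOp_apply hk, E.is_sol_mkSol _ j, ← Fin.sum_univ_eq_sum_range
    (fun i => p.coeff i * E.mkSol _ (j + i)), ← sum_add_distrib]
  simp [E]

lemma Monic.eq_zero_of_recurrenceOp_window_of_isCoprime (hp : p.Monic) (hk : p.natDegree = k)
    {q : R[X]} (hq : q.natDegree ≤ k) (hpq : IsCoprime p q) {n : ℕ} (hn : 2 * k ≤ n)
    {u : ℕ → R} (hpu : ∀ j, j + k < n → recurrenceOp p u j = 0)
    (hqu : ∀ j, j + k < n → recurrenceOp q u j = 0) :
    ∀ j < n, u j = 0 := by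
  obtain ⟨e, hpe, heu⟩ := hp.exists_recurrenceOp_eq_zero hk u
  have hagree : ∀ j < n, (e - u) j = 0 :=
    hp.eq_zero_of_recurrenceOp_window hk
      (fun j hj => by rw [map_sub, Pi.sub_apply, hpe, hpu j hj, Pi.zero_apply, sub_zero])
      (fun j hj => sub_eq_zero.mpr (heu j hj))
  have hqe : recurrenceOp q e = 0 := by
    refine hp.eq_zero_of_recurrenceOp_eq_zero hk (by rw [recurrenceOp_comm, hpe, map_zero])
      fun j hj => ?_
    rw [recurrenceOp_congr hq fun i hi => sub_eq_zero.mp (hagree (j + i) (by omega))]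
    exact hqu j (by omega)
  obtain ⟨a, b, hab⟩ := hpq
  have he : e = 0 := by
    calc e = recurrenceOp (a * p + b * q) e := by rw [hab, map_one, Module.End.one_apply]
      _ = recurrenceOp a (recurrenceOp p e) + recurrenceOp b (recurrenceOp q e) := by
        rw [map_add, map_mul, map_mul]; rfl
      _ = 0 := by rw [hpe, hqe, map_zero, map_zero, add_zero]
  intro j hj
  simpa [he, sub_eq_zero, eq_comm] using hagree j hj

end Polynomial

end RecurrenceOperator

lemma card_hammingNorm_eq_choose {ι : Type*} [Fintype ι] [DecidableEq ι] (j : ℕ) :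
    #{c : ι → ZMod 2 | hammingNorm c = j} = (Fintype.card ι).choose j := by
  rw [← card_univ, ← card_powersetCard]
  refine card_nbij' (fun c => ({i | c i ≠ 0} : Finset ι)) (fun s i => if i ∈ s then 1 else 0)
    ?_ ?_ ?_ ?_
  · intro c hc
    simpa [mem_powersetCard, hammingNorm] using hc
  · intro s hs
    simp only [mem_coe, mem_powersetCard, mem_filter, mem_univ, true_and] at hs ⊢
    rw [hammingNorm, ← hs.2]
    congr 1
    ext i
    by_cases hi : i ∈ s <;> simp [hi]
  · intro c _
    funext i
    have : ∀ x : ZMod 2, x ≠ 0 → x = 1 := by decide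
    by_cases hi : c i = 0 <;> simp [hi, this]
  · intro s _
    ext i
    by_cases hi : i ∈ s <;> simp [hi]

lemma ncard_hammingNorm_mem_Icc {ι : Type*} [Fintype ι] [DecidableEq ι] (a b : ℕ) :
    {c : ι → ZMod 2 | a ≤ hammingNorm c ∧ hammingNorm c ≤ b}.ncard =
      ∑ j ∈ Icc a b, (Fintype.card ι).choose j := by
  rw [Set.ncard_eq_toFinset_card', Set.toFinset_ofPred, card_eq_sum_card_fiberwise
    (f := hammingNorm) (t := Icc a b) fun c hc => by simpa using hc]
  refine sum_congr rfl fun j hj => ?_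
  rw [← card_hammingNorm_eq_choose, filter_filter]
  congr 1
  refine filter_congr fun c _ => ⟨And.right, fun h => ⟨by rw [h]; exact mem_Icc.mp hj, h⟩⟩

lemma sum_ncard_le_ncard_of_pairwiseDisjoint {ι α : Type*} [Finite α] {s : Finset ι}
    {A : ι → Set α} {T : Set α} (hA : (s : Set ι).PairwiseDisjoint A) (hT : ∀ i ∈ s, A i ⊆ T) :
    ∑ i ∈ s, (A i).ncard ≤ T.ncard := by
  rw [← finsum_mem_coe_finset, ← s.finite_toSet.ncard_biUnion (fun _ _ => Set.toFinite _) hA]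
  exact Set.ncard_le_ncard (Set.iUnion₂_subset hT)

lemma Polynomial.Monic.isCoprime_of_irreducible {K : Type*} [Field K] {p q : K[X]}
    (hp : p.Monic) (hq : q.Monic) (hpi : Irreducible p) (hqi : Irreducible q) (hne : p ≠ q) :
    IsCoprime p q :=
  hpi.coprime_iff_not_dvd.mpr fun h =>
    hne (eq_of_monic_of_associated hp hq (hpi.associated_of_dvd hqi h))

lemma IsPrimitivePoly.monic {k : ℕ} {p : (ZMod 2)[X]} (hp : IsPrimitivePoly k p) :
    p.Monic := by
  obtain ⟨α, -, rfl⟩ := hp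
  exact minpoly.monic (.of_finite _ _)

lemma IsPrimitivePoly.irreducible {k : ℕ} {p : (ZMod 2)[X]} (hp : IsPrimitivePoly k p) :
    Irreducible p := by
  obtain ⟨α, -, rfl⟩ := hp
  exact minpoly.irreducible (.of_finite _ _)

/-- A root of order `2^k - 1` cannot lie in a proper subfield `GF(2^m)` of `GF(2^k)`, where it
would satisfy `α^(2^m - 1) = 1`. -/
lemma IsPrimitivePoly.natDegree_eq {k : ℕ} {p : (ZMod 2)[X]} (hp : IsPrimitivePoly k p)
    (hk : 0 < k) : p.natDegree = k := by
  obtain ⟨α, hord, rfl⟩ := hp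
  have hint : IsIntegral (ZMod 2) α := .of_finite _ _
  set m := (minpoly (ZMod 2) α).natDegree
  have hmk : m ≤ k := GaloisField.finrank 2 hk.ne' ▸ minpoly.natDegree_le α
  have hm : 0 < m := minpoly.natDegree_pos hint
  have hα0 : α ≠ 0 := by
    rintro rfl
    rw [orderOf_eq_zero_iff'.mpr fun n hn => by simp [hn.ne']] at hord
    have := Nat.one_lt_two_pow hk.ne'
    omega
  let K := IntermediateField.adjoin (ZMod 2) {α}
  let _ : Fintype K := Fintype.ofFinite K
  have hcard : Fintype.card K = 2 ^ m := by
    rw [Fintype.card_eq_nat_card, Module.natCard_eq_pow_finrank (K := ZMod 2), Nat.card_zmod,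
      IntermediateField.adjoin.finrank hint]
  have hα : α ^ (2 ^ m - 1) = 1 := by
    have hgen := IntermediateField.AdjoinSimple.algebraMap_gen (ZMod 2) α
    have hβ : IntermediateField.AdjoinSimple.gen (ZMod 2) α ≠ 0 := by
      rintro h
      rw [h, map_zero] at hgen
      exact hα0 hgen.symm
    rw [← hgen, ← map_pow, ← hcard, FiniteField.pow_card_sub_one_eq_one _ hβ, map_one]
  have hdvd : 2 ^ k - 1 ∣ 2 ^ m - 1 := hord ▸ orderOf_dvd_of_pow_eq_one hα
  have hle := Nat.le_of_dvd (Nat.sub_pos_of_lt (Nat.one_lt_two_pow hm.ne')) hdvd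
  exact le_antisymm hmk ((Nat.pow_le_pow_iff_right (by norm_num : 1 < 2)).mp
    ((Nat.sub_le_sub_iff_right Nat.one_le_two_pow).mp hle))

def Fin.extendByZero {R : Type*} [Zero R] {n : ℕ} (c : Fin n → R) (j : ℕ) : R :=
  if h : j < n then c ⟨j, h⟩ else 0

lemma recurrenceOp_extendByZero_of_mem_PRcode {k n : ℕ} {p : (ZMod 2)[X]}
    (hp : p.natDegree ≤ k) {c : Fin n → ZMod 2} (hc : c ∈ PRcode k p n) {j : ℕ} (hj : j + k < n) :
    recurrenceOp p (Fin.extendByZero c) j = 0 := by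
  rw [recurrenceOp_apply_of_natDegree_lt (Nat.lt_succ_of_le hp)]
  exact hc j hj

lemma eq_zero_of_mem_PRcode_of_ne {k n : ℕ} (hk : 0 < k) (hn : 2 * k ≤ n)
    {p q : (ZMod 2)[X]} (hp : IsPrimitivePoly k p) (hq : IsPrimitivePoly k q) (hne : p ≠ q)
    {c : Fin n → ZMod 2} (hcp : c ∈ PRcode k p n) (hcq : c ∈ PRcode k q n) : c = 0 := by
  have hpk := hp.natDegree_eq hk
  have hqk := hq.natDegree_eq hk
  have hpq := hp.monic.isCoprime_of_irreducible hq.monic hp.irreducible hq.irreducible hne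
  funext i
  simpa [Fin.extendByZero] using hp.monic.eq_zero_of_recurrenceOp_window_of_isCoprime hpk hqk.le
    hpq hn (fun j => recurrenceOp_extendByZero_of_mem_PRcode hpk.le hcp)
    (fun j => recurrenceOp_extendByZero_of_mem_PRcode hqk.le hcq) i i.2

theorem stmt17_general (k n d : ℕ) (hk : 1 ≤ k) (hn : 2 * k ≤ n) :
    (∑ p ∈ primPolyFinset k,
        {c : Fin n → ZMod 2 |
          c ∈ PRcode k p n ∧ 1 ≤ hammingNorm c ∧ hammingNorm c ≤ d}.ncard) ≤
      ∑ j ∈ Finset.Icc 1 d, Nat.choose n j := by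
  have hdisj : (primPolyFinset k : Set ((ZMod 2)[X])).PairwiseDisjoint fun p =>
      {c : Fin n → ZMod 2 | c ∈ PRcode k p n ∧ 1 ≤ hammingNorm c ∧ hammingNorm c ≤ d} := by
    intro p hp q hq hne
    refine Set.disjoint_left.mpr fun c ⟨hcp, hc1, _⟩ ⟨hcq, _⟩ => ?_
    rw [primPolyFinset, Set.Finite.coe_toFinset] at hp hq
    rw [eq_zero_of_mem_PRcode_of_ne hk hn hp hq hne hcp hcq, hammingNorm_zero] at hc1
    omega
  calc _ ≤ {c : Fin n → ZMod 2 | 1 ≤ hammingNorm c ∧ hammingNorm c ≤ d}.ncard :=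
        sum_ncard_le_ncard_of_pairwiseDisjoint hdisj fun p _ c hc => hc.2
    _ = _ := by rw [ncard_hammingNorm_mem_Icc, Fintype.card_fin]

theorem stmt17 (k n d : ℕ) (hk : 1 ≤ k) (hn : 2 * k ≤ n) (hd : d ≤ n) :
    (∑ p ∈ primPolyFinset k,
        {c : Fin n → ZMod 2 |
          c ∈ PRcode k p n ∧ 1 ≤ hammingNorm c ∧ hammingNorm c ≤ d}.ncard) ≤
      ∑ j ∈ Finset.Icc 1 d, Nat.choose n j :=
  stmt17_general k n d hk hn
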